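/- arXiv:0708.2556 — 2 statements merged into one kernel-verified Lean document; each statement's English description precedes it below -/
import Mathlib

section
/- Let $A$ and $S$ be finite nonempty sets and let $s : (A \times S)^{\mathbb{N}} \to \mathbb{N}$ be a stop rule, i.e., whenever $s(h) = n$ and $h'$ agrees with $h$ on the first $n$ coordinates, then $s(h') = n$. Then $s$ is uniformly bounded: there exists $B \in \mathbb{N}$ such that $s(h) < B$ for all $h$. -/
/-- A stop rule on infinite histories over finite action and signal sets is uniformly
bounded: if `s h` depends only on the first `s h` coordinates of `h`, then there is a
uniform bound `B` with `s h < B` for all `h`. -/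
theorem stmt11 {A S : Type*} [Finite A] [Finite S] [Nonempty A] [Nonempty S]
    (s : (ℕ → A × S) → ℕ)
    (hstop : ∀ h h' : ℕ → A × S, (∀ i < s h, h' i = h i) → s h' = s h) :
    ∃ B : ℕ, ∀ h, s h < B := by
  letI : TopologicalSpace (A × S) := ⊥
  haveI : DiscreteTopology (A × S) := ⟨rfl⟩
  haveI : CompactSpace (A × S) := Finite.compactSpace
  have hlc : IsLocallyConstant s := by
    rw [IsLocallyConstant.iff_exists_open]
    intro h
    refine ⟨(Set.Iio (s h)).pi (fun i => {h i}), ?_, ?_, ?_⟩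
    · exact isOpen_set_pi (Set.finite_Iio _) (fun i _ => isOpen_discrete _)
    · intro i _; rfl
    · intro y hy
      exact hstop h y (fun i hi => hy i hi)
  have hfin : (Set.range s).Finite := hlc.range_finite
  obtain ⟨B, hB⟩ := hfin.bddAbove
  exact ⟨B + 1, fun h => Nat.lt_succ_of_le (hB ⟨h, rfl⟩)⟩
end

section
/- In the stopping game $G(p,A)$ with $0<p<1$ and $A>1/p$: for any Maximizer strategy given by stopping probabilities $\sigma^1_i, \sigma^0_i \ge 0$ (for $b=1$ and $b=0$ respectively, with $\sum_i \sigma^b_i \le 1$), if $p\sum_{i=1}^\infty \sigma^1_i - (1-p)\sum_{i=1}^\infty \sigma^0_i > p - \frac{1-p}{A}$ (the payoff against the never-stopping Minimizer), then $\sum_{i=1}^\infty \sigma^1_i > 1 - \frac{1-p}{Ap}$, and choosing $N$ with $\sum_{i=1}^N \sigma^1_i > 1 - \frac{1-p}{Ap}$, the Minimizer's strategy of stopping at stage $N$ yields payoff $p\sum_{i=1}^N \sigma^1_i + p(1 - \sum_{i=1}^N \sigma^1_i)A - (1-p) < p - \frac{1-p}{A}$. Hence no Maximizer strategy guarantees more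 than $p - \frac{1-p}{A}$, so $\underline{val}(G) = p - \frac{1-p}{A}$. -/
/-!
Against the never-stopping Minimizer the Maximizer gets `p ∑ σ¹ - (1-p) ∑ σ⁰ ≤ p ∑ σ¹`, so
beating `p - (1-p)/A` forces `∑ σ¹ > 1 - (1-p)/(Ap)`. Some partial sum `s = ∑_{i<N} σ¹_i`
already exceeds this threshold, and stopping at stage `N` gives the Minimizer the payoff
`p s + p (1-s) A - (1-p)`, whose excess over `p - (1-p)/A` is `((1-s) A p - (1-p)) (A-1) / A < 0`.
-/

namespace StoppingGame

lemma threshold_lt_of_gain_gt {p A S₁ S₀ : ℝ} (hp0 : 0 < p) (hp1 : p ≤ 1) (hS₀ : 0 ≤ S₀)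
    (hgain : p - (1 - p) / A < p * S₁ - (1 - p) * S₀) :
    1 - (1 - p) / (A * p) < S₁ := by
  have hpS₁ : p - (1 - p) / A < p * S₁ := by
    linarith [mul_nonneg (sub_nonneg.mpr hp1) hS₀]
  have hthreshold : 1 - (1 - p) / (A * p) = (p - (1 - p) / A) / p := by
    field_simp
  rw [hthreshold, div_lt_iff₀ hp0]
  linarith

lemma stopPayoff_sub_value_mul {p A : ℝ} (s : ℝ) (hA : A ≠ 0) :
    (p * s + p * (1 - s) * A - (1 - p) - (p - (1 - p) / A)) * A =
      ((1 - s) * (A * p) - (1 - p)) * (A - 1) := by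
  field_simp
  ring

lemma stopPayoff_lt_value {p A s : ℝ} (hp0 : 0 < p) (hA : 1 < A)
    (hs : 1 - (1 - p) / (A * p) < s) :
    p * s + p * (1 - s) * A - (1 - p) < p - (1 - p) / A := by
  have hA0 : 0 < A := one_pos.trans hA
  have hbelow : (1 - s) * (A * p) < 1 - p := by
    rw [← lt_div_iff₀ (by positivity)]
    linarith
  have hexcess : (p * s + p * (1 - s) * A - (1 - p) - (p - (1 - p) / A)) * A < 0 := by
    rw [stopPayoff_sub_value_mul s hA0.ne']
    exact mul_neg_of_neg_of_pos (by linarith) (sub_pos.mpr hA)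
  linarith [neg_of_mul_neg_left hexcess hA0.le]

end StoppingGame

open StoppingGame in
theorem stmt15_general (p A : ℝ) (hp0 : 0 < p) (hp1 : p < 1) (hA : A > 1 / p)
    (σ1 σ0 : ℕ → ℝ) (hσ0 : ∀ i, 0 ≤ σ0 i)
    (hs1 : Summable σ1)
    (hgain : p * (∑' i, σ1 i) - (1 - p) * (∑' i, σ0 i) > p - (1 - p) / A) :
    (∑' i, σ1 i) > 1 - (1 - p) / (A * p) ∧
    ∃ N : ℕ, (∑ i ∈ Finset.range N, σ1 i) > 1 - (1 - p) / (A * p) ∧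
      p * (∑ i ∈ Finset.range N, σ1 i) +
        p * (1 - ∑ i ∈ Finset.range N, σ1 i) * A - (1 - p) <
        p - (1 - p) / A := by
  have hS₁ : 1 - (1 - p) / (A * p) < ∑' i, σ1 i :=
    threshold_lt_of_gain_gt hp0 hp1.le (tsum_nonneg hσ0) hgain
  obtain ⟨N, hN⟩ :=
    (hs1.hasSum.tendsto_sum_nat.eventually (eventually_gt_nhds hS₁)).exists
  exact ⟨hS₁, N, hN, stopPayoff_lt_value hp0 ((one_lt_one_div hp0 hp1).trans hA) hN⟩

/-- In the stopping game `G(p,A)` with `0 < p < 1`, `A > 1/p`: if a Maximizer strategy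
(stopping probabilities `σ1` when `b = 1`, `σ0` when `b = 0`) yields more than
`p - (1-p)/A` against the never-stopping Minimizer, then `∑ σ1 > 1 - (1-p)/(Ap)`, and
for some `N` with `∑_{i<N} σ1 i > 1 - (1-p)/(Ap)`, the Minimizer's strategy of stopping
at stage `N` yields payoff `p ∑_{i<N} σ1 + p (1 - ∑_{i<N} σ1) A - (1-p) < p - (1-p)/A`. -/
theorem stmt15 (p A : ℝ) (hp0 : 0 < p) (hp1 : p < 1) (hA : A > 1 / p)
    (σ1 σ0 : ℕ → ℝ) (hσ1 : ∀ i, 0 ≤ σ1 i) (hσ0 : ∀ i, 0 ≤ σ0 i)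
    (hs1 : Summable σ1) (hs0 : Summable σ0)
    (ht1 : ∑' i, σ1 i ≤ 1) (ht0 : ∑' i, σ0 i ≤ 1)
    (hgain : p * (∑' i, σ1 i) - (1 - p) * (∑' i, σ0 i) > p - (1 - p) / A) :
    (∑' i, σ1 i) > 1 - (1 - p) / (A * p) ∧
    ∃ N : ℕ, (∑ i ∈ Finset.range N, σ1 i) > 1 - (1 - p) / (A * p) ∧
      p * (∑ i ∈ Finset.range N, σ1 i) +
        p * (1 - ∑ i ∈ Finset.range N, σ1 i) * A - (1 - p) <
        p - (1 - p) / A :=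
  stmt15_general p A hp0 hp1 hA σ1 σ0 hσ0 hs1 hgain
end
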